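/- arXiv:2109.05452 — 2 statements merged into one kernel-verified Lean document; each statement's English description precedes it below -/
import Mathlib

section
/- For all integers a, d with d > 3a > 0, one has b_{a,d} ≥ u_{0,d-2} - a, where b_{a,d} is defined by a(3d+1) + (d+1)b_{a,d} + c_{a,d} = binom(d+3,3), 0 ≤ c_{a,d} ≤ d, and u_{0,d-2} is defined by (d-1)u_{0,d-2} - v_{0,d-2} = binom(d+1,3), 0 ≤ v_{0,d-2} ≤ d-2. -/
/-!
Clearing denominators with `6 * binom(n, 3) = n (n - 1) (n - 2)`, the two defining relations
combine, after multiplying by `d - 1` and `d + 1`, into the identity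
`6 (d² - 1)(b - u + a) = (d² - 1)(4d + 6) - 12 a d (d - 1) - 6 (d - 1) c - 6 (d + 1) v`.
Bounding `c ≤ d`, `v ≤ d - 2` and `3a ≤ d - 1`, the right-hand side exceeds `-6 (d² - 1)`
by at least `8d² + 4d > 0`, so `b - u + a > -1`.
-/

theorem Nat.cast_choose_three_mul_six {R : Type*} [CommRing R] (n : ℕ) :
    (n.choose 3 : R) * 6 = n * (n - 1) * (n - 2) := by
  have h := congrArg (Nat.cast (R := R)) (Nat.descFactorial_eq_factorial_mul_choose n 3)
  rw [← descPochhammer_eval_eq_descFactorial] at h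
  norm_num [descPochhammer_succ_eval, Nat.factorial] at h
  linear_combination -h

theorem Int.sub_le_of_six_mul_eq_cubic {a b c d u v : ℤ} (ha : 0 ≤ a) (had : 3 * a < d)
    (hcd : c ≤ d) (hvd : v ≤ d - 2)
    (hbc : 6 * (a * (3 * d + 1) + (d + 1) * b + c) = (d + 1) * (d + 2) * (d + 3))
    (huv : 6 * ((d - 1) * u - v) = (d - 1) * d * (d + 1)) :
    u - a ≤ b := by
  have key : 6 * (d ^ 2 - 1) * (b - u + a) =
      (d ^ 2 - 1) * (4 * d + 6) - 12 * a * d * (d - 1) - 6 * (d - 1) * c - 6 * (d + 1) * v := by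
    linear_combination (d - 1) * hbc - (d + 1) * huv
  by_contra! h
  have hd : 1 ≤ d := by omega
  nlinarith [mul_le_mul_of_nonneg_left hcd (by omega : 0 ≤ d - 1),
    mul_le_mul_of_nonneg_left hvd (by omega : 0 ≤ d + 1),
    mul_le_mul_of_nonneg_left (by omega : 3 * a ≤ d - 1) (by nlinarith : 0 ≤ d * (d - 1)),
    mul_le_mul_of_nonneg_left (by omega : b - u + a ≤ -1) (by nlinarith : 0 ≤ d ^ 2 - 1)]

theorem stmt_5_general (a d : ℕ) (had : 3 * a < d) (b c u v : ℤ)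
    (hcd : c ≤ (d : ℤ))
    (hbc : (a : ℤ) * (3 * (d : ℤ) + 1) + ((d : ℤ) + 1) * b + c = ((d + 3).choose 3 : ℤ))
    (hvd : v ≤ (d : ℤ) - 2)
    (huv : ((d : ℤ) - 1) * u - v = ((d + 1).choose 3 : ℤ)) :
    b ≥ u - (a : ℤ) := by
  have h3 := Nat.cast_choose_three_mul_six (R := ℤ) (d + 3)
  have h1 := Nat.cast_choose_three_mul_six (R := ℤ) (d + 1)
  push_cast at h3 h1
  exact Int.sub_le_of_six_mul_eq_cubic (by positivity) (by exact_mod_cast had) hcd hvd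
    (by linear_combination 6 * hbc + h3) (by linear_combination 6 * huv + h1)

/-- For all integers `a, d` with `d > 3a > 0`, `b_{a,d} ≥ u_{0,d-2} - a`. -/
theorem stmt_5 (a d : ℕ) (ha : 0 < a) (had : 3 * a < d) (b c u v : ℤ)
    (hc0 : 0 ≤ c) (hcd : c ≤ (d : ℤ))
    (hbc : (a : ℤ) * (3 * (d : ℤ) + 1) + ((d : ℤ) + 1) * b + c = ((d + 3).choose 3 : ℤ))
    (hv0 : 0 ≤ v) (hvd : v ≤ (d : ℤ) - 2)
    (huv : ((d : ℤ) - 1) * u - v = ((d + 1).choose 3 : ℤ)) :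
    b ≥ u - (a : ℤ) :=
  stmt_5_general a d had b c u v hcd hbc hvd huv
end

section
/- For all integers a, d with d - 1 > 3a > 0, one has b_{a,d-1} + 1 ≥ u_{0,d-3} - a, where b_{a,d-1} is defined by a(3d-2) + d·b_{a,d-1} + c_{a,d-1} = binom(d+2,3) with 0 ≤ c_{a,d-1} ≤ d-1, and u_{0,d-3} is defined by (d-2)u_{0,d-3} - v_{0,d-3} = binom(d,3) with 0 ≤ v_{0,d-3} ≤ d-3. -/
theorem sub_le_add_one_of_mul_eq {R : Type*} [CommRing R] [LinearOrder R] [IsStrictOrderedRing R]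
    {a d b c u v : R} (ha : 0 ≤ a) (had : 3 * a + 2 ≤ d) (hcd : c ≤ d - 1) (hvd : v ≤ d - 3)
    (hbc : 6 * (a * (3 * d - 2) + d * b + c) = d * (d + 1) * (d + 2))
    (huv : 6 * ((d - 2) * u - v) = d * (d - 1) * (d - 2)) :
    u - a ≤ b + 1 := by
  have hd : 0 ≤ d - 2 := by linarith
  have gap : 6 * (d * (d - 2)) * (b + 1 + a - u) = 2 * d * (d - 2) * (2 * d + 4)
      - 12 * a * (d - 2) * (d - 1) - 6 * (d - 2) * c - 6 * d * v := by
    linear_combination (d - 2) * hbc - d * huv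
  have gap_pos : 0 < 6 * (d * (d - 2)) * (b + 1 + a - u) := by
    rw [gap]
    nlinarith [mul_nonneg hd (sub_nonneg.2 hcd), mul_nonneg (by linarith : 0 ≤ d) (sub_nonneg.2 hvd),
      mul_nonneg (by linarith : 0 ≤ d - 2 - 3 * a) (mul_nonneg hd (by linarith : 0 ≤ d - 1)),
      mul_pos (by linarith : 0 < d - 1) (by linarith : 0 < 2 * d - 1)]
  have := pos_of_mul_pos_right gap_pos (mul_nonneg (by norm_num) (mul_nonneg (by linarith) hd))
  linarith

theorem stmt_15_general (a d : ℕ) (had : 3 * a + 1 < d) (b c u v : ℤ)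
    (hcd : c ≤ (d : ℤ) - 1)
    (hbc : (a : ℤ) * (3 * (d : ℤ) - 2) + (d : ℤ) * b + c = ((d + 2).choose 3 : ℤ))
    (hvd : v ≤ (d : ℤ) - 3)
    (huv : ((d : ℤ) - 2) * u - v = (d.choose 3 : ℤ)) :
    b + 1 ≥ u - (a : ℤ) := by
  have choose_top := Nat.cast_choose_three_mul_six (R := ℤ) (d + 2)
  have choose_bot := Nat.cast_choose_three_mul_six (R := ℤ) d
  push_cast at choose_top
  exact sub_le_add_one_of_mul_eq (Nat.cast_nonneg a) (by omega) hcd hvd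
    (by linear_combination 6 * hbc + choose_top) (by linear_combination 6 * huv + choose_bot)

/-- For all integers `a, d` with `d - 1 > 3a > 0`, `b_{a,d-1} + 1 ≥ u_{0,d-3} - a`. -/
theorem stmt_15 (a d : ℕ) (ha : 0 < a) (had : 3 * a + 1 < d) (b c u v : ℤ)
    (hc0 : 0 ≤ c) (hcd : c ≤ (d : ℤ) - 1)
    (hbc : (a : ℤ) * (3 * (d : ℤ) - 2) + (d : ℤ) * b + c = ((d + 2).choose 3 : ℤ))
    (hv0 : 0 ≤ v) (hvd : v ≤ (d : ℤ) - 3)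
    (huv : ((d : ℤ) - 2) * u - v = (d.choose 3 : ℤ)) :
    b + 1 ≥ u - (a : ℤ) :=
  stmt_15_general a d had b c u v hcd hbc hvd huv
end
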